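/- Let G be a path graph with vertices v_1, …, v_n in path order, and let U, U' ⊆ V(G) with m(U) = m(U') be adjacent under the component sliding rule CS. Then h_U = h_{U'}; that is, the sequence of sizes of the connected components, listed in left-to-right order along the path, is invariant under any CS move. -/

import Mathlib

/-!
On a path a connected vertex set is an interval, and distinct components of `U` are disjoint.
A CS move replaces one component `C` by a component `C'` of the same size such that `C ∪ C'` is
an interval. Every other component `D` is disjoint from that interval, so it lies entirely to its
left or entirely to its right: `D` sits on the same side of `C` as of `C'`. Hence the
left-to-right order of the components is unchanged, with `C'` in the place of `C`, and so is the
sequence of their sizes.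
-/

open scoped Classical

noncomputable section

/-- `U` induces a connected subgraph of `G`. -/
def IsConnSub {V : Type*} (G : SimpleGraph V) (U : Finset V) : Prop :=
  (G.induce (U : Set V)).Connected

/-- The set of connected components of a vertex subset `U`:
maximal subsets of `U` inducing connected subgraphs. -/
def comps {V : Type*} [Fintype V] [DecidableEq V] (G : SimpleGraph V) (U : Finset V) :
    Finset (Finset V) :=
  Finset.univ.filter (fun C => C ⊆ U ∧ IsConnSub G C ∧
    ∀ D : Finset V, C ⊆ D → D ⊆ U → IsConnSub G D → D = C)

/-- The CC-multiset of `U`: the multiset of sizes of connected components of `U`. -/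
def ccMultiset {V : Type*} [Fintype V] [DecidableEq V] (G : SimpleGraph V) (U : Finset V) :
    Multiset ℕ :=
  (comps G U).val.map Finset.card

/-- Adjacency under component jumping (CJ). -/
def adjCJ {V : Type*} [Fintype V] [DecidableEq V] (G : SimpleGraph V) (U U' : Finset V) : Prop :=
  ccMultiset G U = ccMultiset G U' ∧
  (comps G U \ comps G U').card = 1 ∧ (comps G U' \ comps G U).card = 1

/-- Adjacency under component sliding (CS). -/
def adjCS {V : Type*} [Fintype V] [DecidableEq V] (G : SimpleGraph V) (U U' : Finset V) : Prop :=
  adjCJ G U U' ∧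
  ∀ C ∈ comps G U \ comps G U', ∀ C' ∈ comps G U' \ comps G U, IsConnSub G (C ∪ C')

/-- Adjacency under CS1 (component sliding by one vertex). -/
def adjCS1 {V : Type*} [Fintype V] [DecidableEq V] (G : SimpleGraph V) (U U' : Finset V) : Prop :=
  adjCS G U U' ∧
  ∀ C ∈ comps G U \ comps G U', ∀ C' ∈ comps G U' \ comps G U,
    (C \ C').card = 1 ∧ (C' \ C).card = 1

/-- Adjacency under token jumping (TJ). -/
def adjTJ {V : Type*} [DecidableEq V] (G : SimpleGraph V) (U U' : Finset V) : Prop :=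
  (U \ U').card = 1 ∧ (U' \ U).card = 1

/-- `A` and `B` are reconfigurable under rule `R` keeping the CC-multiset equal to `M`. -/
def Reconf {V : Type*} [Fintype V] [DecidableEq V] (G : SimpleGraph V) (M : Multiset ℕ)
    (R : Finset V → Finset V → Prop) (A B : Finset V) : Prop :=
  ∃ (ℓ : ℕ) (W : ℕ → Finset V), W 0 = A ∧ W ℓ = B ∧
    (∀ i ≤ ℓ, ccMultiset G (W i) = M) ∧ ∀ i < ℓ, R (W i) (W (i + 1))

end

/-- `h_U`: the sequence of sizes of connected components of `U` along the path,
listed in left-to-right order (ordering components by their minimum vertex). -/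
noncomputable def hseq (n : ℕ) (U : Finset (Fin n)) : List ℕ :=
  (((comps (SimpleGraph.pathGraph n) U).image (fun C => C.min)).sort (· ≤ ·)).map
    (fun m => ((comps (SimpleGraph.pathGraph n) U).filter (fun C => C.min = m)).sup Finset.card)

theorem Finset.sort_image_of_strictMonoOn {α β : Type*} [LinearOrder α] [LinearOrder β]
    {f : α → β} {s : Finset α} (hf : StrictMonoOn f s) :
    (s.image f).sort (· ≤ ·) = (s.sort (· ≤ ·)).map f := by
  refine List.Pairwise.eq_of_mem_iff (r := (· < ·)) (Finset.sortedLT_sort _).pairwise ?_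
    (by simp)
  rw [List.pairwise_map]
  exact (Finset.sortedLT_sort s).pairwise.imp_of_mem fun ha hb hab =>
    hf ((Finset.mem_sort _).1 ha) ((Finset.mem_sort _).1 hb) hab

theorem Finset.map_sort_insert_eq_map_sort_insert {α γ : Type*} [LinearOrder α]
    {s : Finset α} {a b : α} {f g : α → γ}
    (hsep : ∀ x ∈ s, (x < a ∧ x < b) ∨ (a < x ∧ b < x))
    (hfg : ∀ x ∈ s, f x = g x) (hab : f a = g b) :
    ((insert a s).sort (· ≤ ·)).map f = ((insert b s).sort (· ≤ ·)).map g := by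
  have ha : a ∉ s := fun h => by rcases hsep a h with h | h <;> exact lt_irrefl a h.1
  set ψ := Function.update id a b
  have hψs : ∀ x ∈ s, ψ x = x := fun x hx =>
    Function.update_of_ne (by rintro rfl; exact ha hx) _ _
  have hψa : ψ a = b := by simp [ψ]
  have hψ : StrictMonoOn ψ ↑(insert a s) := by
    intro x hx y hy hxy
    rw [Finset.mem_coe, Finset.mem_insert] at hx hy
    rcases hx with rfl | hx <;> rcases hy with rfl | hy
    · exact absurd hxy (lt_irrefl _)
    · rw [hψs y hy, hψa]
      rcases hsep y hy with h | h
      exacts [absurd hxy h.1.not_gt, h.2]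
    · rw [hψs x hx, hψa]
      rcases hsep x hx with h | h
      exacts [h.2, absurd hxy h.1.not_gt]
    · rwa [hψs x hx, hψs y hy]
  have himage : (insert a s).image ψ = insert b s := by
    rw [Finset.image_insert, hψa, Finset.image_congr hψs, Finset.image_id']
  rw [← himage, Finset.sort_image_of_strictMonoOn hψ, List.map_map]
  refine List.map_congr_left fun x hx => ?_
  rcases Finset.mem_insert.1 ((Finset.mem_sort _).1 hx) with rfl | hx
  · rw [Function.comp_apply, hψa, hab]
  · rw [Function.comp_apply, hψs x hx, hfg x hx]

theorem Set.OrdConnected.forall_lt_or_forall_gt_of_disjoint {α : Type*} [LinearOrder α]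
    {s t : Set α} (hs : s.OrdConnected) (ht : t.OrdConnected) (hst : Disjoint s t) :
    (∀ x ∈ s, ∀ y ∈ t, x < y) ∨ (∀ x ∈ s, ∀ y ∈ t, y < x) := by
  by_contra! ⟨⟨x, hx, y, hy, hyx⟩, ⟨x', hx', y', hy', hxy'⟩⟩
  rcases le_or_gt x y' with h | h
  · exact hst.ne_of_mem hx (ht.out hy hy' ⟨hyx, h⟩) rfl
  · exact hst.ne_of_mem (hs.out hx' hx ⟨hxy', h.le⟩) hy' rfl

theorem Finset.min_lt_min_of_forall_lt {α : Type*} [LinearOrder α] {s t : Finset α}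
    (hs : s.Nonempty) (ht : t.Nonempty) (h : ∀ x ∈ s, ∀ y ∈ t, x < y) : s.min < t.min := by
  obtain ⟨a, ha⟩ := Finset.min_of_nonempty hs
  obtain ⟨b, hb⟩ := Finset.min_of_nonempty ht
  rw [ha, hb]
  exact WithTop.coe_lt_coe.2 (h a (Finset.mem_of_min ha) b (Finset.mem_of_min hb))

theorem Finset.min_ne_min_of_disjoint {α : Type*} [LinearOrder α] {s t : Finset α}
    (hs : s.Nonempty) (hst : Disjoint s t) : s.min ≠ t.min := by
  obtain ⟨a, ha⟩ := Finset.min_of_nonempty hs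
  intro h
  exact Finset.disjoint_left.1 hst (Finset.mem_of_min ha) (Finset.mem_of_min (h ▸ ha))

theorem Finset.min_lt_min_and_or_of_disjoint_union {α : Type*} [LinearOrder α]
    {s t t' : Finset α} (hs : (s : Set α).OrdConnected)
    (htt' : (↑(t ∪ t') : Set α).OrdConnected)
    (hst : Disjoint s (t ∪ t')) (hsne : s.Nonempty) (htne : t.Nonempty) (ht'ne : t'.Nonempty) :
    (s.min < t.min ∧ s.min < t'.min) ∨ (t.min < s.min ∧ t'.min < s.min) := by
  rcases hs.forall_lt_or_forall_gt_of_disjoint htt' (Finset.disjoint_coe.2 hst) with h | h <;>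
    simp only [Finset.mem_coe, Finset.mem_union] at h
  · exact Or.inl ⟨Finset.min_lt_min_of_forall_lt hsne htne fun x hx y hy => h x hx y (.inl hy),
      Finset.min_lt_min_of_forall_lt hsne ht'ne fun x hx y hy => h x hx y (.inr hy)⟩
  · exact Or.inr ⟨Finset.min_lt_min_of_forall_lt htne hsne fun x hx y hy => h y hy x (.inl hx),
      Finset.min_lt_min_of_forall_lt ht'ne hsne fun x hx y hy => h y hy x (.inr hx)⟩

section Components

variable {V : Type*} [Fintype V] [DecidableEq V] {G : SimpleGraph V} {U U' C D : Finset V}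

theorem mem_comps :
    C ∈ comps G U ↔ C ⊆ U ∧ IsConnSub G C ∧
      ∀ D : Finset V, C ⊆ D → D ⊆ U → IsConnSub G D → D = C := by
  simp [comps]

theorem nonempty_of_mem_comps (hC : C ∈ comps G U) : C.Nonempty := by
  obtain ⟨⟨x, hx⟩⟩ := (mem_comps.1 hC).2.1.nonempty
  exact ⟨x, hx⟩

theorem disjoint_of_mem_comps (hC : C ∈ comps G U) (hD : D ∈ comps G U) (hCD : C ≠ D) :
    Disjoint C D := by
  obtain ⟨hCU, hCconn, hCmax⟩ := mem_comps.1 hC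
  obtain ⟨hDU, hDconn, hDmax⟩ := mem_comps.1 hD
  refine Finset.disjoint_left.2 fun x hxC hxD => hCD ?_
  have hunion : IsConnSub G (C ∪ D) := by
    rw [IsConnSub, Finset.coe_union]
    exact SimpleGraph.induce_union_connected hCconn.preconnected hDconn.preconnected
      ⟨x, hxC, hxD⟩
  have hDC : D ⊆ C :=
    hCmax _ Finset.subset_union_left (Finset.union_subset hCU hDU) hunion ▸
      Finset.subset_union_right
  exact hDmax C hDC hCU hCconn

theorem min_ne_min_of_mem_comps [LinearOrder V] (hC : C ∈ comps G U) (hD : D ∈ comps G U)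
    (hCD : C ≠ D) : C.min ≠ D.min :=
  Finset.min_ne_min_of_disjoint (nonempty_of_mem_comps hC) (disjoint_of_mem_comps hC hD hCD)

theorem sup_card_filter_min_eq_card [LinearOrder V] (hD : D ∈ comps G U) :
    ((comps G U).filter (fun E => E.min = D.min)).sup Finset.card = D.card := by
  have hfilter : (comps G U).filter (fun E => E.min = D.min) = {D} := by
    ext E
    simp only [Finset.mem_filter, Finset.mem_singleton]
    refine ⟨fun ⟨hE, hmin⟩ => ?_, by rintro rfl; exact ⟨hD, rfl⟩⟩
    by_contra hED
    exact min_ne_min_of_mem_comps hE hD hED hmin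
  rw [hfilter, Finset.sup_singleton]

theorem adjCS.exists_eq_insert (h : adjCS G U U') :
    ∃ (C C' : Finset V) (S : Finset (Finset V)), C ∉ S ∧ C' ∉ S ∧
      comps G U = insert C S ∧ comps G U' = insert C' S ∧ C.card = C'.card ∧
      IsConnSub G (C ∪ C') := by
  obtain ⟨⟨hcc, h1, h2⟩, hslide⟩ := h
  obtain ⟨C, hC⟩ := Finset.card_eq_one.1 h1
  obtain ⟨C', hC'⟩ := Finset.card_eq_one.1 h2
  have hCmem : C ∈ comps G U \ comps G U' := hC ▸ Finset.mem_singleton_self C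
  have hC'mem : C' ∈ comps G U' \ comps G U := hC' ▸ Finset.mem_singleton_self C'
  set S := comps G U ∩ comps G U'
  have hCS : C ∉ S := fun h => (Finset.mem_sdiff.1 hCmem).2 (Finset.mem_inter.1 h).2
  have hC'S : C' ∉ S := fun h => (Finset.mem_sdiff.1 hC'mem).2 (Finset.mem_inter.1 h).1
  have hU : comps G U = insert C S := by
    rw [Finset.insert_eq, ← hC, Finset.sdiff_union_inter]
  have hU' : comps G U' = insert C' S := by
    rw [Finset.insert_eq, ← hC', show S = comps G U' ∩ comps G U from Finset.inter_comm _ _,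
      Finset.sdiff_union_inter]
  refine ⟨C, C', S, hCS, hC'S, hU, hU', ?_, hslide C hCmem C' hC'mem⟩
  rw [ccMultiset, ccMultiset, hU, hU', Finset.insert_val_of_notMem hCS,
    Finset.insert_val_of_notMem hC'S, Multiset.map_cons, Multiset.map_cons] at hcc
  exact (Multiset.cons_inj_left _).1 hcc

end Components

theorem IsConnSub.ordConnected_pathGraph {n : ℕ} {C : Finset (Fin n)}
    (h : IsConnSub (SimpleGraph.pathGraph n) C) : (C : Set (Fin n)).OrdConnected := by
  refine ⟨fun a ha b hb c ⟨hac, hcb⟩ => ?_⟩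
  by_contra hc
  have hac : a < c := hac.lt_of_ne fun h => hc (h ▸ ha)
  obtain ⟨w⟩ := h.preconnected ⟨a, ha⟩ ⟨b, hb⟩
  -- the walk must step from below `c` to `c` itself
  obtain ⟨d, -, hlt, hge⟩ := w.exists_boundary_dart {x | x.val < c} hac (not_lt.2 hcb)
  have hadj : (d.fst : Fin n).val + 1 = (d.snd : Fin n).val ∨
      (d.snd : Fin n).val + 1 = (d.fst : Fin n).val :=
    SimpleGraph.pathGraph_adj.1 d.adj
  simp only [Set.mem_ofPred_eq, not_lt] at hlt hge
  have : (d.snd : Fin n) = c := by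
    rw [Fin.lt_def] at hlt; rw [Fin.le_def] at hge; omega
  exact hc (this ▸ d.snd.2)

theorem min_lt_min_and_or_of_mem_comps_pathGraph {n : ℕ} {U U' C C' D : Finset (Fin n)}
    (hC : C ∈ comps (SimpleGraph.pathGraph n) U) (hC' : C' ∈ comps (SimpleGraph.pathGraph n) U')
    (hD : D ∈ comps (SimpleGraph.pathGraph n) U) (hD' : D ∈ comps (SimpleGraph.pathGraph n) U')
    (hDC : D ≠ C) (hDC' : D ≠ C') (hslide : IsConnSub (SimpleGraph.pathGraph n) (C ∪ C')) :
    (D.min < C.min ∧ D.min < C'.min) ∨ (C.min < D.min ∧ C'.min < D.min) :=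
  Finset.min_lt_min_and_or_of_disjoint_union
    (mem_comps.1 hD).2.1.ordConnected_pathGraph hslide.ordConnected_pathGraph
    (Finset.disjoint_union_right.2
      ⟨disjoint_of_mem_comps hD hC hDC, disjoint_of_mem_comps hD' hC' hDC'⟩)
    (nonempty_of_mem_comps hD) (nonempty_of_mem_comps hC) (nonempty_of_mem_comps hC')

/-- On a path graph, any CS move leaves the left-to-right sequence
of component sizes invariant. -/
theorem stmt2 (n : ℕ) (U U' : Finset (Fin n))
    (h : adjCS (SimpleGraph.pathGraph n) U U') :
    hseq n U = hseq n U' := by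
  obtain ⟨C, C', S, hCS, hC'S, hU, hU', hcard, hslide⟩ := h.exists_eq_insert
  have hC : C ∈ comps _ U := hU ▸ Finset.mem_insert_self C S
  have hC' : C' ∈ comps _ U' := hU' ▸ Finset.mem_insert_self C' S
  have hD : ∀ D ∈ S, D ∈ comps _ U := fun D hDS => hU ▸ Finset.mem_insert_of_mem hDS
  have hD' : ∀ D ∈ S, D ∈ comps _ U' := fun D hDS => hU' ▸ Finset.mem_insert_of_mem hDS
  have hsep : ∀ D ∈ S,
      (D.min < C.min ∧ D.min < C'.min) ∨ (C.min < D.min ∧ C'.min < D.min) := fun D hDS =>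
    min_lt_min_and_or_of_mem_comps_pathGraph hC hC' (hD D hDS) (hD' D hDS)
      (by rintro rfl; exact hCS hDS) (by rintro rfl; exact hC'S hDS) hslide
  -- rewrite only the key sets; the size functions stay in terms of `comps`
  rw [hseq, hseq, hU, hU', Finset.image_insert, Finset.image_insert, ← hU, ← hU']
  refine Finset.map_sort_insert_eq_map_sort_insert (Finset.forall_mem_image.2 hsep)
    (Finset.forall_mem_image.2 fun D hDS => ?_) ?_
  · rw [sup_card_filter_min_eq_card (hD D hDS), sup_card_filter_min_eq_card (hD' D hDS)]
  · rw [sup_card_filter_min_eq_card hC, sup_card_filter_min_eq_card hC', hcard]
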